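/- Let f be a tempered distribution on ℝ^d, x₀ ∈ ℝ^d, ξ₀ ∈ ℝ^d \ {0} and s ∈ ℝ. Suppose there exist a compact neighbourhood K₁ of x₀ (a closed ball centred at x₀ of radius r > 0), a cone neighbourhood Γ of ξ₀, C > 0 and k ∈ ℕ such that (∫_Γ ⟨ξ⟩^{2s}|F(χf)(ξ)|² dξ)^{1/2} ≤ C · sup_{|α| ≤ k} ‖D^α χ‖_{L^∞(K₁)} for all compactly supported smooth χ with support in K₁. Then, with K the closed ball centred at x₀ of radius r/2, one has sup_{x ∈ K} (∫_Γ ⟨ξ⟩^{2s}|V_χ f(x,ξ)|² dξ)^{1/2} ≤ C · sup_{|α| ≤ k} ‖D^α χ‖_{L^∞(ℝ^d)} for all compactly supported smooth χ with support contained in K − {x₀} := {y ∈ ℝ^d : y + x₀ ∈ K}. (Theorem 1.2, (ii) ⇒ (iii).) -/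

import Mathlib

set_option maxHeartbeats 1000000

open MeasureTheory Complex
open scoped ContDiff InnerProductSpace ENNReal RealInnerProductSpace

variable {d : ℕ}

/-- A compactly supported smooth function is a Schwartz function. -/
noncomputable def toSchwartz (g : EuclideanSpace ℝ (Fin d) → ℂ)
    (hg : ContDiff ℝ ∞ g) (hgc : HasCompactSupport g) :
    SchwartzMap (EuclideanSpace ℝ (Fin d)) ℂ where
  toFun := g
  smooth' := hg
  decay' := by
    intro k n
    have h1 : HasCompactSupport fun x : EuclideanSpace ℝ (Fin d) =>
        ‖x‖ ^ k • iteratedFDeriv ℝ n g x := by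
      apply (hgc.iteratedFDeriv (𝕜 := ℝ) n).mono
      intro x hx
      simp only [Function.mem_support] at hx ⊢
      intro h
      exact hx (by rw [h, smul_zero])
    obtain ⟨C, hC⟩ := h1.exists_bound_of_continuous
      ((continuous_norm.pow k).smul (hg.continuous_iteratedFDeriv (mod_cast le_top)))
    refine ⟨C, fun x => ?_⟩
    have := hC x
    rwa [norm_smul, norm_pow, norm_norm] at this

/-- The Fourier transform of `χ f` at `ξ`, i.e. `⟨f, t ↦ e^{-i⟨ξ,t⟩} χ(t)⟩`. -/
noncomputable def FT (f : SchwartzMap (EuclideanSpace ℝ (Fin d)) ℂ →L[ℂ] ℂ)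
    (χ : EuclideanSpace ℝ (Fin d) → ℂ) (hχ : ContDiff ℝ ∞ χ) (hχc : HasCompactSupport χ)
    (ξ : EuclideanSpace ℝ (Fin d)) : ℂ :=
  f (toSchwartz (fun t => Complex.exp (-(⟪ξ, t⟫ : ℝ) * Complex.I) * χ t)
      (((((Complex.ofRealCLM.contDiff.comp (innerSL ℝ ξ).contDiff).neg.mul
        contDiff_const).cexp)).mul hχ)
      hχc.mul_left)

/-- The short-time Fourier transform `V_χ f (x, ξ) = ⟨f, t ↦ e^{-i⟨ξ,t⟩} conj (χ (t - x))⟩`. -/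
noncomputable def STFT (f : SchwartzMap (EuclideanSpace ℝ (Fin d)) ℂ →L[ℂ] ℂ)
    (χ : EuclideanSpace ℝ (Fin d) → ℂ) (hχ : ContDiff ℝ ∞ χ) (hχc : HasCompactSupport χ)
    (x ξ : EuclideanSpace ℝ (Fin d)) : ℂ :=
  FT f (fun t => (starRingEnd ℂ) (χ (t - x)))
    ((Complex.conjCLE.contDiff).comp (hχ.comp (contDiff_id.sub contDiff_const)))
    ((hχc.comp_left (g := starRingEnd ℂ) (map_zero _)).comp_isClosedEmbedding
      (Homeomorph.subRight x).isClosedEmbedding)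
    ξ

/-- A cone neighbourhood of `ξ₀`. -/
def IsConeNbhd (Γ : Set (EuclideanSpace ℝ (Fin d))) (ξ₀ : EuclideanSpace ℝ (Fin d)) : Prop :=
  IsOpen Γ ∧ ξ₀ ∈ Γ ∧ (0 : EuclideanSpace ℝ (Fin d)) ∉ Γ ∧
    ∀ ξ ∈ Γ, ∀ t : ℝ, 0 < t → t • ξ ∈ Γ

/-- A cone in `ℝ^d \ {0}`. -/
def IsCone (Γ : Set (EuclideanSpace ℝ (Fin d))) : Prop :=
  (0 : EuclideanSpace ℝ (Fin d)) ∉ Γ ∧ ∀ ξ ∈ Γ, ∀ t : ℝ, 0 < t → t • ξ ∈ Γ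

/-- `sup_{|α| ≤ k} ‖D^α χ‖_{L^∞(ℝ^d)}`, formalised via iterated Fréchet derivatives. -/
noncomputable def supNorm (k : ℕ) (χ : EuclideanSpace ℝ (Fin d) → ℂ) : ℝ :=
  (Finset.range (k + 1)).sup' (by simp) fun i => ⨆ x, ‖iteratedFDeriv ℝ i χ x‖

/-- `sup_{|α| ≤ k} ‖D^α χ‖_{L^∞(K)}`. -/
noncomputable def supNormOn (K : Set (EuclideanSpace ℝ (Fin d))) (k : ℕ)
    (χ : EuclideanSpace ℝ (Fin d) → ℂ) : ℝ :=
  (Finset.range (k + 1)).sup' (by simp) fun i => ⨆ x : K, ‖iteratedFDeriv ℝ i χ (x : EuclideanSpace ℝ (Fin d))‖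

/-- `∫_Γ ⟨ξ⟩^{2s} |g(ξ)|² dξ`, where `⟨ξ⟩^{2s} = (1+|ξ|²)^s`. -/
noncomputable def sqIntCone (s : ℝ) (Γ : Set (EuclideanSpace ℝ (Fin d)))
    (g : EuclideanSpace ℝ (Fin d) → ℂ) : ℝ≥0∞ :=
  ∫⁻ ξ in Γ, ENNReal.ofReal ((1 + ‖ξ‖ ^ 2) ^ s) * (‖g ξ‖₊ : ℝ≥0∞) ^ 2

/-- `‖⟨·⟩^s g‖_{L²(Γ)}`. -/
noncomputable def l2Cone (s : ℝ) (Γ : Set (EuclideanSpace ℝ (Fin d)))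
    (g : EuclideanSpace ℝ (Fin d) → ℂ) : ℝ≥0∞ :=
  sqIntCone s Γ g ^ (1 / 2 : ℝ)

/-!
The short-time Fourier transform at `x` is the Fourier transform of `ψ f` for the window
`ψ = conj (χ (· - x))`. If `χ` is supported in the ball of radius `r / 2` about `0` and `x` lies
within `r / 2` of `x₀`, then `ψ` is supported in the ball of radius `r` about `x₀`, so the
hypothesis applies to `ψ`. Restricting the sup norms to that ball can only decrease them, and
translation and complex conjugation leave the sup norms of all derivatives unchanged.
-/

theorem tsupport_conj_comp_sub {E : Type*} [TopologicalSpace E] [AddGroup E]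
    [IsTopologicalAddGroup E] (χ : E → ℂ) (x : E) :
    tsupport (fun t => (starRingEnd ℂ) (χ (t - x))) = (· - x) ⁻¹' tsupport χ := by
  rw [← tsupport_comp_eq (g := starRingEnd ℂ) (map_eq_zero _) χ]
  exact tsupport_comp_eq_preimage (starRingEnd ℂ ∘ χ) (Homeomorph.subRight x)

theorem tsupport_conj_comp_sub_subset_closedBall {E : Type*} [SeminormedAddCommGroup E]
    {χ : E → ℂ} {x₀ x : E} {ρ ρ' : ℝ} (hχ : tsupport χ ⊆ {y | y + x₀ ∈ Metric.closedBall x₀ ρ})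
    (hx : x ∈ Metric.closedBall x₀ ρ') :
    tsupport (fun t => (starRingEnd ℂ) (χ (t - x))) ⊆ Metric.closedBall x₀ (ρ + ρ') := by
  intro t ht
  rw [tsupport_conj_comp_sub] at ht
  have htx : ‖t - x‖ ≤ ρ := by
    simpa [dist_eq_norm] using hχ ht
  rw [Metric.mem_closedBall, dist_eq_norm] at hx ⊢
  linarith [norm_sub_le_norm_sub_add_norm_sub t x x₀]

theorem norm_iteratedFDeriv_conj_comp_sub {E : Type*} [NormedAddCommGroup E] [NormedSpace ℝ E]
    (χ : E → ℂ) (x t : E) (i : ℕ) :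
    ‖iteratedFDeriv ℝ i (fun t => (starRingEnd ℂ) (χ (t - x))) t‖ =
      ‖iteratedFDeriv ℝ i χ (t - x)‖ := by
  rw [show (fun t => (starRingEnd ℂ) (χ (t - x))) = conjLIE ∘ fun t => χ (t - x) from rfl,
    LinearIsometryEquiv.norm_iteratedFDeriv_comp_left, iteratedFDeriv_comp_sub]

theorem bddAbove_range_norm_iteratedFDeriv {E F : Type*} [NormedAddCommGroup E]
    [NormedSpace ℝ E] [NormedAddCommGroup F] [NormedSpace ℝ F] {χ : E → F}
    (hχ : ContDiff ℝ ∞ χ) (hχc : HasCompactSupport χ) (i : ℕ) :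
    BddAbove (Set.range fun y => ‖iteratedFDeriv ℝ i χ y‖) := by
  obtain ⟨B, hB⟩ := (hχc.iteratedFDeriv (𝕜 := ℝ) i).exists_bound_of_continuous
    (hχ.continuous_iteratedFDeriv (mod_cast le_top))
  exact ⟨B, Set.forall_mem_range.2 hB⟩

theorem supNormOn_le_supNorm {χ : EuclideanSpace ℝ (Fin d) → ℂ} (hχ : ContDiff ℝ ∞ χ)
    (hχc : HasCompactSupport χ) (K : Set (EuclideanSpace ℝ (Fin d))) (k : ℕ) :
    supNormOn K k χ ≤ supNorm k χ := by
  refine Finset.sup'_mono_fun fun i _ => ?_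
  exact Real.iSup_le (fun t => le_ciSup (bddAbove_range_norm_iteratedFDeriv hχ hχc i) _)
    (Real.iSup_nonneg fun _ => norm_nonneg _)

theorem supNorm_conj_comp_sub (χ : EuclideanSpace ℝ (Fin d) → ℂ)
    (x : EuclideanSpace ℝ (Fin d)) (k : ℕ) :
    supNorm k (fun t => (starRingEnd ℂ) (χ (t - x))) = supNorm k χ := by
  unfold supNorm
  congr 1
  ext i
  simp only [norm_iteratedFDeriv_conj_comp_sub]
  exact (Equiv.subRight x).iSup_comp (g := fun y => ‖iteratedFDeriv ℝ i χ y‖)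

theorem stmt7_general {d : ℕ} (f : SchwartzMap (EuclideanSpace ℝ (Fin d)) ℂ →L[ℂ] ℂ)
    (x₀ : EuclideanSpace ℝ (Fin d)) (s : ℝ) (r : ℝ)
    (Γ : Set (EuclideanSpace ℝ (Fin d))) (C : ℝ) (hC : 0 < C) (k : ℕ)
    (hbound : ∀ (χ : EuclideanSpace ℝ (Fin d) → ℂ) (hχ : ContDiff ℝ ∞ χ) (hχc : HasCompactSupport χ),
      tsupport χ ⊆ Metric.closedBall x₀ r →
      l2Cone s Γ (FT f χ hχ hχc) ≤
        ENNReal.ofReal (C * supNormOn (Metric.closedBall x₀ r) k χ)) :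
    ∀ (χ : EuclideanSpace ℝ (Fin d) → ℂ) (hχ : ContDiff ℝ ∞ χ) (hχc : HasCompactSupport χ),
      tsupport χ ⊆ {y : EuclideanSpace ℝ (Fin d) | y + x₀ ∈ Metric.closedBall x₀ (r / 2)} →
      ∀ x ∈ Metric.closedBall x₀ (r / 2),
        l2Cone s Γ (STFT f χ hχ hχc x) ≤ ENNReal.ofReal (C * supNorm k χ) := by
  intro χ hχ hχc hsupp x hx
  have hψ : ContDiff ℝ ∞ fun t => (starRingEnd ℂ) (χ (t - x)) :=
    conjCLE.contDiff.comp (hχ.comp (contDiff_id.sub contDiff_const))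
  have hψc : HasCompactSupport fun t => (starRingEnd ℂ) (χ (t - x)) :=
    (hχc.comp_left (map_zero _)).comp_homeomorph (Homeomorph.subRight x)
  have hψsupp := tsupport_conj_comp_sub_subset_closedBall hsupp hx
  rw [add_halves] at hψsupp
  calc l2Cone s Γ (STFT f χ hχ hχc x) = l2Cone s Γ (FT f _ hψ hψc) := rfl
    _ ≤ ENNReal.ofReal (C * supNormOn (Metric.closedBall x₀ r) k _) := hbound _ hψ hψc hψsupp
    _ ≤ ENNReal.ofReal (C * supNorm k χ) := by
      rw [← supNorm_conj_comp_sub χ x]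
      gcongr
      exact supNormOn_le_supNorm hψ hψc _ k

/-- Theorem 1.2, (ii) ⇒ (iii). -/
theorem stmt7 {d : ℕ} (f : SchwartzMap (EuclideanSpace ℝ (Fin d)) ℂ →L[ℂ] ℂ)
    (x₀ ξ₀ : EuclideanSpace ℝ (Fin d)) (hξ₀ : ξ₀ ≠ 0) (s : ℝ) (r : ℝ) (hr : 0 < r)
    (Γ : Set (EuclideanSpace ℝ (Fin d))) (hΓ : IsConeNbhd Γ ξ₀) (C : ℝ) (hC : 0 < C) (k : ℕ)
    (hbound : ∀ (χ : EuclideanSpace ℝ (Fin d) → ℂ) (hχ : ContDiff ℝ ∞ χ) (hχc : HasCompactSupport χ),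
      tsupport χ ⊆ Metric.closedBall x₀ r →
      l2Cone s Γ (FT f χ hχ hχc) ≤
        ENNReal.ofReal (C * supNormOn (Metric.closedBall x₀ r) k χ)) :
    ∀ (χ : EuclideanSpace ℝ (Fin d) → ℂ) (hχ : ContDiff ℝ ∞ χ) (hχc : HasCompactSupport χ),
      tsupport χ ⊆ {y : EuclideanSpace ℝ (Fin d) | y + x₀ ∈ Metric.closedBall x₀ (r / 2)} →
      ∀ x ∈ Metric.closedBall x₀ (r / 2),
        l2Cone s Γ (STFT f χ hχ hχc x) ≤ ENNReal.ofReal (C * supNorm k χ) :=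
  stmt7_general f x₀ s r Γ C hC k hbound
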